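/- Let (M₁,g) and (M₂,h) be pseudo-Riemannian manifolds with dim M₂ = n, f : M₁×M₂ → ℝ⁺ a smooth positive function, and ξ = log f. On the twisted product M̄ = M₁ ×_f M₂ with metric ḡ = g ⊕ f²h, the mixed components of the Ricci tensor satisfy Ric̄(∂ᵢ, ∂_α) = (1−n) ∂ᵢ∂_α(ξ) for ∂ᵢ tangent to M₁ and ∂_α tangent to M₂. -/

import Mathlib

noncomputable section

open Matrix

variable {ι : Type*} [Fintype ι] [DecidableEq ι]

/-- Partial derivative in the `i`-th coordinate direction. -/
def pd (i : ι) (φ : (ι → ℝ) → ℝ) (x : ι → ℝ) : ℝ :=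
  fderiv ℝ φ x (Pi.single i 1)

/-- Christoffel symbols `Γ^k_{ij}` of a coordinate metric. -/
def christoffel (g : (ι → ℝ) → Matrix ι ι ℝ) (k i j : ι) (x : ι → ℝ) : ℝ :=
  (1 / 2) * ∑ l, (g x)⁻¹ k l *
    (pd i (fun y => g y l j) x + pd j (fun y => g y l i) x - pd l (fun y => g y i j) x)

/-- Ricci curvature components `R_{ij}` of a coordinate metric. -/
def ricci (g : (ι → ℝ) → Matrix ι ι ℝ) (i j : ι) (x : ι → ℝ) : ℝ :=
  (∑ k, (pd k (christoffel g k i j) x - pd j (christoffel g k i k) x))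
  + ∑ k, ∑ l, (christoffel g k k l x * christoffel g l i j x
      - christoffel g k j l x * christoffel g l i k x)

/-- Scalar curvature of a coordinate metric. -/
def scalarCurv (g : (ι → ℝ) → Matrix ι ι ℝ) (x : ι → ℝ) : ℝ :=
  ∑ i, ∑ j, (g x)⁻¹ i j * ricci g i j x

/-- Hessian `H_φ(∂_i,∂_j)` with respect to the Levi-Civita connection of `g`. -/
def hess (g : (ι → ℝ) → Matrix ι ι ℝ) (φ : (ι → ℝ) → ℝ) (i j : ι) (x : ι → ℝ) : ℝ :=
  pd i (pd j φ) x - ∑ k, christoffel g k i j x * pd k φ x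

/-- Laplace–Beltrami operator of `g`. -/
def laplacian (g : (ι → ℝ) → Matrix ι ι ℝ) (φ : (ι → ℝ) → ℝ) (x : ι → ℝ) : ℝ :=
  ∑ i, ∑ j, (g x)⁻¹ i j * hess g φ i j x

/-- Inner product of gradients `g(∇φ,∇ψ)`. -/
def gradInner (g : (ι → ℝ) → Matrix ι ι ℝ) (φ ψ : (ι → ℝ) → ℝ) (x : ι → ℝ) : ℝ :=
  ∑ i, ∑ j, (g x)⁻¹ i j * pd i φ x * pd j ψ x

/-- Einstein tensor `G_{ij} = R_{ij} - (1/2) S g_{ij}`. -/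
def einstein (g : (ι → ℝ) → Matrix ι ι ℝ) (i j : ι) (x : ι → ℝ) : ℝ :=
  ricci g i j x - (1 / 2) * scalarCurv g x * g x i j

/-- A (pseudo-Riemannian) coordinate metric: symmetric, everywhere invertible and smooth. -/
def IsMetric (g : (ι → ℝ) → Matrix ι ι ℝ) : Prop :=
  (∀ x, (g x).IsSymm) ∧ (∀ x, IsUnit (g x).det) ∧
    ∀ i j, ContDiff ℝ (⊤ : ℕ∞) (fun x => g x i j)

/-- A Riemannian coordinate metric. -/
def IsRiemannMetric (g : (ι → ℝ) → Matrix ι ι ℝ) : Prop :=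
  (∀ x, (g x).PosDef) ∧ ∀ i j, ContDiff ℝ (⊤ : ℕ∞) (fun x => g x i j)

/-- The twisted product metric `ḡ = g ⊕ f²h` on `M₁ × M₂`, where the twisting
function `f` may depend on the points of both factors. -/
def twistedMetric {m n : ℕ} (g : (Fin m → ℝ) → Matrix (Fin m) (Fin m) ℝ)
    (h : (Fin n → ℝ) → Matrix (Fin n) (Fin n) ℝ)
    (f : ((Fin m ⊕ Fin n) → ℝ) → ℝ) :
    ((Fin m ⊕ Fin n) → ℝ) → Matrix (Fin m ⊕ Fin n) (Fin m ⊕ Fin n) ℝ :=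
  fun x => Matrix.fromBlocks (g (x ∘ Sum.inl)) 0 0 ((f x) ^ 2 • h (x ∘ Sum.inr))

/-! ### Auxiliary lemmas -/

lemma pd_const' (i : ι) (c : ℝ) (x : ι → ℝ) : pd i (fun _ => c) x = 0 := by
  simp [pd]

lemma pd_eq_zero_of_line_const (j : ι) (ψ : (ι → ℝ) → ℝ) (x : ι → ℝ)
    (hc : ∀ t : ℝ, ψ (x + t • (Pi.single j 1 : ι → ℝ)) = ψ x) : pd j ψ x = 0 := by
  by_cases H : DifferentiableAt ℝ ψ x
  · have h1 : HasLineDerivAt ℝ ψ (fderiv ℝ ψ x (Pi.single j 1)) x (Pi.single j 1) :=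
      H.hasFDerivAt.hasLineDerivAt _
    have h2 : HasLineDerivAt ℝ ψ 0 x (Pi.single j 1) := by
      have hfun : (fun t : ℝ => ψ (x + t • (Pi.single j 1 : ι → ℝ))) = fun _ => ψ x :=
        funext hc
      unfold HasLineDerivAt
      rw [hfun]
      exact hasDerivAt_const _ _
    simpa [pd] using h1.unique h2
  · simp [pd, fderiv_zero_of_not_differentiableAt H]

lemma pd_mul (j : ι) (c d : (ι → ℝ) → ℝ) (x : ι → ℝ)
    (hc : DifferentiableAt ℝ c x) (hd : DifferentiableAt ℝ d x) :
    pd j (fun y => c y * d y) x = c x * pd j d x + d x * pd j c x := by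
  simp [pd, fderiv_fun_mul hc hd]

lemma pd_log (j : ι) (f : (ι → ℝ) → ℝ) (x : ι → ℝ)
    (hf : DifferentiableAt ℝ f x) (hfx : f x ≠ 0) :
    pd j (fun y => Real.log (f y)) x = (f x)⁻¹ * pd j f x := by
  have := (hf.hasFDerivAt.log hfx).fderiv
  simp [pd, this]

lemma pd_comm (φ : (ι → ℝ) → ℝ) (hφ : ContDiff ℝ (⊤ : ℕ∞) φ) (i j : ι) (x : ι → ℝ) :
    pd i (pd j φ) x = pd j (pd i φ) x := by
  have hd : Differentiable ℝ φ := hφ.differentiable (by simp)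
  have hf' : ContDiff ℝ (⊤ : ℕ∞) (fderiv ℝ φ) := hφ.fderiv_right (by exact_mod_cast le_top)
  have hdd : DifferentiableAt ℝ (fderiv ℝ φ) x :=
    (hf'.differentiable (by simp)).differentiableAt
  have key := second_derivative_symmetric (f := φ) (f' := fderiv ℝ φ)
    (f'' := fderiv ℝ (fderiv ℝ φ) x) (fun y => (hd y).hasFDerivAt) hdd.hasFDerivAt
  have ev : ∀ (k l : ι), pd k (pd l φ) x
      = (fderiv ℝ (fderiv ℝ φ) x (Pi.single k 1)) (Pi.single l 1) := by
    intro k l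
    have hrfl : pd l φ = fun y => (fderiv ℝ φ y) (Pi.single l 1) := rfl
    rw [pd, hrfl, fderiv_clm_apply hdd (differentiableAt_const _)]
    simp
  rw [ev i j, ev j i, key]

lemma christoffel_symm (G : (ι → ℝ) → Matrix ι ι ℝ) (hs : ∀ x, (G x).IsSymm)
    (k i j : ι) (x : ι → ℝ) : christoffel G k i j x = christoffel G k j i x := by
  unfold christoffel
  congr 1
  apply Finset.sum_congr rfl
  intro l _
  have hij : (fun y => G y i j) = fun y => G y j i := by
    funext y
    exact ((hs y).apply i j).symm
  rw [hij]
  ring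

section Twisted

variable {m n : ℕ} {g : (Fin m → ℝ) → Matrix (Fin m) (Fin m) ℝ}
    {h : (Fin n → ℝ) → Matrix (Fin n) (Fin n) ℝ}
    {f : ((Fin m ⊕ Fin n) → ℝ) → ℝ}

/-- restriction to the first factor, as a continuous linear map. -/
def L1 : ((Fin m ⊕ Fin n) → ℝ) →L[ℝ] (Fin m → ℝ) :=
  ContinuousLinearMap.pi fun i => ContinuousLinearMap.proj (Sum.inl i)

lemma pd_inr_comp_inl (φ : (Fin m → ℝ) → ℝ) (α : Fin n) (x : (Fin m ⊕ Fin n) → ℝ) :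
    pd (Sum.inr α) (fun y => φ (y ∘ Sum.inl)) x = 0 := by
  apply pd_eq_zero_of_line_const
  intro t
  congr 1
  funext i
  simp [Pi.single_apply]

lemma pd_inl_comp_inr (φ : (Fin n → ℝ) → ℝ) (i : Fin m) (x : (Fin m ⊕ Fin n) → ℝ) :
    pd (Sum.inl i) (fun y => φ (y ∘ Sum.inr)) x = 0 := by
  apply pd_eq_zero_of_line_const
  intro t
  congr 1
  funext β
  simp [Pi.single_apply]

lemma pd_inl_comp_inl (φ : (Fin m → ℝ) → ℝ) (i : Fin m) (x : (Fin m ⊕ Fin n) → ℝ)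
    (hφ : DifferentiableAt ℝ φ (x ∘ Sum.inl)) :
    pd (Sum.inl i) (fun y => φ (y ∘ Sum.inl)) x = pd i φ (x ∘ Sum.inl) := by
  have hcomp : (fun y : (Fin m ⊕ Fin n) → ℝ => φ (y ∘ Sum.inl))
      = φ ∘ (L1 : ((Fin m ⊕ Fin n) → ℝ) →L[ℝ] (Fin m → ℝ)) := rfl
  have h1 : fderiv ℝ (fun y : (Fin m ⊕ Fin n) → ℝ => φ (y ∘ Sum.inl)) x
      = (fderiv ℝ φ (x ∘ Sum.inl)).comp (L1 : ((Fin m ⊕ Fin n) → ℝ) →L[ℝ] (Fin m → ℝ)) := by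
    rw [hcomp, fderiv_comp x hφ (L1.differentiableAt), L1.fderiv]
    rfl
  have h2 : (L1 : ((Fin m ⊕ Fin n) → ℝ) →L[ℝ] (Fin m → ℝ)) (Pi.single (Sum.inl i) 1)
      = Pi.single i 1 := by
    funext j
    simp [L1, Pi.single_apply]
  simp only [pd, h1, ContinuousLinearMap.comp_apply, h2]

variable (g h f) in
lemma twisted_inv (hg : ∀ x, IsUnit (g x).det) (hh : ∀ x, IsUnit (h x).det)
    (hfpos : ∀ x, 0 < f x) (x : (Fin m ⊕ Fin n) → ℝ) :
    (twistedMetric g h f x)⁻¹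
      = fromBlocks (g (x ∘ Sum.inl))⁻¹ 0 0 (((f x) ^ 2)⁻¹ • (h (x ∘ Sum.inr))⁻¹) := by
  apply inv_eq_right_inv
  unfold twistedMetric
  rw [fromBlocks_multiply]
  have hfx : (f x) ^ 2 ≠ 0 := pow_ne_zero _ (hfpos x).ne'
  have hD : ((f x) ^ 2 • h (x ∘ Sum.inr)) * (((f x) ^ 2)⁻¹ • (h (x ∘ Sum.inr))⁻¹) = 1 := by
    rw [smul_mul, Matrix.mul_smul, smul_smul, mul_inv_cancel₀ hfx, one_smul,
      mul_nonsing_inv _ (hh _)]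
  rw [mul_nonsing_inv _ (hg _), hD]
  simp [fromBlocks_one]

variable (g h f) in
lemma twisted_symm (hg : ∀ x, (g x).IsSymm) (hh : ∀ x, (h x).IsSymm)
    (x : (Fin m ⊕ Fin n) → ℝ) : (twistedMetric g h f x).IsSymm := by
  unfold twistedMetric Matrix.IsSymm
  rw [fromBlocks_transpose, transpose_smul, (hg _).eq, (hh _).eq]
  simp

/-! entries of the twisted metric -/

lemma tm11 (a b : Fin m) (y : (Fin m ⊕ Fin n) → ℝ) :
    twistedMetric g h f y (Sum.inl a) (Sum.inl b) = g (y ∘ Sum.inl) a b := rfl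

lemma tm12 (a : Fin m) (b : Fin n) (y : (Fin m ⊕ Fin n) → ℝ) :
    twistedMetric g h f y (Sum.inl a) (Sum.inr b) = 0 := rfl

lemma tm21 (a : Fin n) (b : Fin m) (y : (Fin m ⊕ Fin n) → ℝ) :
    twistedMetric g h f y (Sum.inr a) (Sum.inl b) = 0 := rfl

lemma tm22 (a b : Fin n) (y : (Fin m ⊕ Fin n) → ℝ) :
    twistedMetric g h f y (Sum.inr a) (Sum.inr b) = f y ^ 2 * h (y ∘ Sum.inr) a b := rfl


lemma pd_zero' (j : ι) (x : ι → ℝ) : pd j (fun _ => (0:ℝ)) x = 0 := pd_const' j 0 x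

def L2 : ((Fin m ⊕ Fin n) → ℝ) →L[ℝ] (Fin n → ℝ) :=
  ContinuousLinearMap.pi fun β => ContinuousLinearMap.proj (Sum.inr β)

lemma diff_comp_inr {φ : (Fin n → ℝ) → ℝ} (hφ : Differentiable ℝ φ) :
    Differentiable ℝ (fun y : (Fin m ⊕ Fin n) → ℝ => φ (y ∘ Sum.inr)) :=
  hφ.comp (L2 : ((Fin m ⊕ Fin n) → ℝ) →L[ℝ] (Fin n → ℝ)).differentiable

variable (g h f) in
lemma pdTM_inl22 (hh : IsMetric h) (hfd : Differentiable ℝ f) (i : Fin m) (a b : Fin n)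
    (x : (Fin m ⊕ Fin n) → ℝ) :
    pd (Sum.inl i) (fun y => twistedMetric g h f y (Sum.inr a) (Sum.inr b)) x
      = 2 * f x * pd (Sum.inl i) f x * h (x ∘ Sum.inr) a b := by
  have hent : (fun y => twistedMetric g h f y (Sum.inr a) (Sum.inr b))
      = fun y => (f y * f y) * h (y ∘ Sum.inr) a b := by
    funext y
    rw [tm22]
    ring
  rw [hent]
  have hhd : DifferentiableAt ℝ (fun y : (Fin m ⊕ Fin n) → ℝ => h (y ∘ Sum.inr) a b) x :=
    (diff_comp_inr ((hh.2.2 a b).differentiable (by simp))).differentiableAt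
  rw [pd_mul _ (fun y => f y * f y) _ x ((hfd x).mul (hfd x)) hhd,
      pd_mul _ _ _ x (hfd x) (hfd x)]
  have h0 : pd (Sum.inl i) (fun y => h (y ∘ Sum.inr) a b) x = 0 :=
    pd_inl_comp_inr (fun z => h z a b) i x
  rw [h0]
  ring

variable (g h f) in
lemma christoffel_C3 (hgu : ∀ x, IsUnit (g x).det) (hhu : ∀ x, IsUnit (h x).det)
    (hfpos : ∀ x, 0 < f x) (k i : Fin m) (β : Fin n) (x : (Fin m ⊕ Fin n) → ℝ) :
    christoffel (twistedMetric g h f) (Sum.inl k) (Sum.inl i) (Sum.inr β) x = 0 := by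
  unfold christoffel
  rw [twisted_inv g h f hgu hhu hfpos x]
  refine mul_eq_zero_of_right _ (Finset.sum_eq_zero fun l _ => ?_)
  rcases l with l | δ
  · have e1 : pd (Sum.inl i)
        (fun y => twistedMetric g h f y (Sum.inl l) (Sum.inr β)) x = 0 :=
      pd_const' _ 0 x
    have e2 : pd (Sum.inr β)
        (fun y => twistedMetric g h f y (Sum.inl l) (Sum.inl i)) x = 0 :=
      pd_inr_comp_inl (fun z => g z l i) β x
    have e3 : pd (Sum.inl l)
        (fun y => twistedMetric g h f y (Sum.inl i) (Sum.inr β)) x = 0 :=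
      pd_const' _ 0 x
    rw [e1, e2, e3]
    ring
  · have : fromBlocks (g (x ∘ Sum.inl))⁻¹ 0 0 (((f x) ^ 2)⁻¹ • (h (x ∘ Sum.inr))⁻¹)
        (Sum.inl k) (Sum.inr δ) = 0 := rfl
    rw [this, zero_mul]

variable (g h f) in
lemma christoffel_C3b (hgu : ∀ x, IsUnit (g x).det) (hhu : ∀ x, IsUnit (h x).det)
    (hfpos : ∀ x, 0 < f x) (k i : Fin m) (β : Fin n) (x : (Fin m ⊕ Fin n) → ℝ) :
    christoffel (twistedMetric g h f) (Sum.inl k) (Sum.inr β) (Sum.inl i) x = 0 := by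
  unfold christoffel
  rw [twisted_inv g h f hgu hhu hfpos x]
  refine mul_eq_zero_of_right _ (Finset.sum_eq_zero fun l _ => ?_)
  rcases l with l | δ
  · have e1 : pd (Sum.inr β)
        (fun y => twistedMetric g h f y (Sum.inl l) (Sum.inl i)) x = 0 :=
      pd_inr_comp_inl (fun z => g z l i) β x
    have e2 : pd (Sum.inl i)
        (fun y => twistedMetric g h f y (Sum.inl l) (Sum.inr β)) x = 0 :=
      pd_const' _ 0 x
    have e3 : pd (Sum.inl l)
        (fun y => twistedMetric g h f y (Sum.inr β) (Sum.inl i)) x = 0 :=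
      pd_const' _ 0 x
    rw [e1, e2, e3]
    ring
  · have : fromBlocks (g (x ∘ Sum.inl))⁻¹ 0 0 (((f x) ^ 2)⁻¹ • (h (x ∘ Sum.inr))⁻¹)
        (Sum.inl k) (Sum.inr δ) = 0 := rfl
    rw [this, zero_mul]

variable (g h f) in
lemma christoffel_C2 (hgu : ∀ x, IsUnit (g x).det) (hhu : ∀ x, IsUnit (h x).det)
    (hfpos : ∀ x, 0 < f x) (γ : Fin n) (i j : Fin m) (x : (Fin m ⊕ Fin n) → ℝ) :
    christoffel (twistedMetric g h f) (Sum.inr γ) (Sum.inl i) (Sum.inl j) x = 0 := by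
  unfold christoffel
  rw [twisted_inv g h f hgu hhu hfpos x]
  refine mul_eq_zero_of_right _ (Finset.sum_eq_zero fun l _ => ?_)
  rcases l with l | δ
  · have : fromBlocks (g (x ∘ Sum.inl))⁻¹ 0 0 (((f x) ^ 2)⁻¹ • (h (x ∘ Sum.inr))⁻¹)
        (Sum.inr γ) (Sum.inl l) = 0 := rfl
    rw [this, zero_mul]
  · have e1 : pd (Sum.inl i)
        (fun y => twistedMetric g h f y (Sum.inr δ) (Sum.inl j)) x = 0 :=
      pd_const' _ 0 x
    have e2 : pd (Sum.inl j)
        (fun y => twistedMetric g h f y (Sum.inr δ) (Sum.inl i)) x = 0 :=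
      pd_const' _ 0 x
    have e3 : pd (Sum.inr δ)
        (fun y => twistedMetric g h f y (Sum.inl i) (Sum.inl j)) x = 0 :=
      pd_inr_comp_inl (fun z => g z i j) δ x
    rw [e1, e2, e3]
    ring


variable (g h f) in
lemma christoffel_C4 (hgu : ∀ x, IsUnit (g x).det) (hhu : ∀ x, IsUnit (h x).det)
    (hfpos : ∀ x, 0 < f x) (hh : IsMetric h) (hfd : Differentiable ℝ f)
    (γ : Fin n) (i : Fin m) (β : Fin n) (x : (Fin m ⊕ Fin n) → ℝ) :
    christoffel (twistedMetric g h f) (Sum.inr γ) (Sum.inl i) (Sum.inr β) x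
      = if γ = β then (f x)⁻¹ * pd (Sum.inl i) f x else 0 := by
  unfold christoffel
  rw [twisted_inv g h f hgu hhu hfpos x, Fintype.sum_sum_type]
  have hsum1 : ∑ l : Fin m,
      (fromBlocks (g (x ∘ Sum.inl))⁻¹ 0 0 (((f x) ^ 2)⁻¹ • (h (x ∘ Sum.inr))⁻¹)
        (Sum.inr γ) (Sum.inl l)) *
      (pd (Sum.inl i) (fun y => twistedMetric g h f y (Sum.inl l) (Sum.inr β)) x
        + pd (Sum.inr β) (fun y => twistedMetric g h f y (Sum.inl l) (Sum.inl i)) x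
        - pd (Sum.inl l) (fun y => twistedMetric g h f y (Sum.inl i) (Sum.inr β)) x) = 0 := by
    refine Finset.sum_eq_zero fun l _ => ?_
    have : fromBlocks (g (x ∘ Sum.inl))⁻¹ 0 0 (((f x) ^ 2)⁻¹ • (h (x ∘ Sum.inr))⁻¹)
        (Sum.inr γ) (Sum.inl l) = 0 := rfl
    rw [this, zero_mul]
  rw [hsum1, zero_add]
  have hterm : ∀ δ : Fin n,
      (fromBlocks (g (x ∘ Sum.inl))⁻¹ 0 0 (((f x) ^ 2)⁻¹ • (h (x ∘ Sum.inr))⁻¹)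
        (Sum.inr γ) (Sum.inr δ)) *
      (pd (Sum.inl i) (fun y => twistedMetric g h f y (Sum.inr δ) (Sum.inr β)) x
        + pd (Sum.inr β) (fun y => twistedMetric g h f y (Sum.inr δ) (Sum.inl i)) x
        - pd (Sum.inr δ) (fun y => twistedMetric g h f y (Sum.inl i) (Sum.inr β)) x)
      = (((f x) ^ 2)⁻¹ * (2 * f x * pd (Sum.inl i) f x))
          * ((h (x ∘ Sum.inr))⁻¹ γ δ * h (x ∘ Sum.inr) δ β) := by
    intro δ
    have einv : fromBlocks (g (x ∘ Sum.inl))⁻¹ 0 0 (((f x) ^ 2)⁻¹ • (h (x ∘ Sum.inr))⁻¹)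
        (Sum.inr γ) (Sum.inr δ) = ((f x) ^ 2)⁻¹ * (h (x ∘ Sum.inr))⁻¹ γ δ := rfl
    have e1 := pdTM_inl22 g h f hh hfd i δ β x
    have e2 : pd (Sum.inr β)
        (fun y => twistedMetric g h f y (Sum.inr δ) (Sum.inl i)) x = 0 :=
      pd_const' _ 0 x
    have e3 : pd (Sum.inr δ)
        (fun y => twistedMetric g h f y (Sum.inl i) (Sum.inr β)) x = 0 :=
      pd_const' _ 0 x
    rw [einv, e1, e2, e3]
    ring
  rw [Finset.sum_congr rfl (fun δ _ => hterm δ), ← Finset.mul_sum]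
  have hsum2 : ∑ δ : Fin n, (h (x ∘ Sum.inr))⁻¹ γ δ * h (x ∘ Sum.inr) δ β
      = if γ = β then 1 else 0 := by
    have hmm : ((h (x ∘ Sum.inr))⁻¹ * h (x ∘ Sum.inr)) γ β
        = ∑ δ : Fin n, (h (x ∘ Sum.inr))⁻¹ γ δ * h (x ∘ Sum.inr) δ β := Matrix.mul_apply
    rw [← hmm, nonsing_inv_mul _ (hhu _), Matrix.one_apply]
  rw [hsum2]
  have hfx : f x ≠ 0 := (hfpos x).ne'
  by_cases hgb : γ = β
  · rw [if_pos hgb, if_pos hgb]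
    field_simp
  · rw [if_neg hgb, if_neg hgb]
    ring

variable (g h f) in
lemma christoffel_C1 (hg : IsMetric g) (hhu : ∀ x, IsUnit (h x).det)
    (hfpos : ∀ x, 0 < f x) (k i j : Fin m) (x : (Fin m ⊕ Fin n) → ℝ) :
    christoffel (twistedMetric g h f) (Sum.inl k) (Sum.inl i) (Sum.inl j) x
      = christoffel g k i j (x ∘ Sum.inl) := by
  unfold christoffel
  rw [twisted_inv g h f hg.2.1 hhu hfpos x, Fintype.sum_sum_type]
  have hsum2 : ∑ δ : Fin n,
      (fromBlocks (g (x ∘ Sum.inl))⁻¹ 0 0 (((f x) ^ 2)⁻¹ • (h (x ∘ Sum.inr))⁻¹)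
        (Sum.inl k) (Sum.inr δ)) *
      (pd (Sum.inl i) (fun y => twistedMetric g h f y (Sum.inr δ) (Sum.inl j)) x
        + pd (Sum.inl j) (fun y => twistedMetric g h f y (Sum.inr δ) (Sum.inl i)) x
        - pd (Sum.inr δ) (fun y => twistedMetric g h f y (Sum.inl i) (Sum.inl j)) x) = 0 := by
    refine Finset.sum_eq_zero fun δ _ => ?_
    have : fromBlocks (g (x ∘ Sum.inl))⁻¹ 0 0 (((f x) ^ 2)⁻¹ • (h (x ∘ Sum.inr))⁻¹)
        (Sum.inl k) (Sum.inr δ) = 0 := rfl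
    rw [this, zero_mul]
  rw [hsum2, add_zero]
  congr 1
  refine Finset.sum_congr rfl fun l _ => ?_
  have einv : fromBlocks (g (x ∘ Sum.inl))⁻¹ 0 0 (((f x) ^ 2)⁻¹ • (h (x ∘ Sum.inr))⁻¹)
      (Sum.inl k) (Sum.inl l) = (g (x ∘ Sum.inl))⁻¹ k l := rfl
  have dgi : ∀ a b : Fin m, DifferentiableAt ℝ (fun z => g z a b) (x ∘ Sum.inl) :=
    fun a b => ((hg.2.2 a b).differentiable (by simp)).differentiableAt
  have e1 : pd (Sum.inl i) (fun y => twistedMetric g h f y (Sum.inl l) (Sum.inl j)) x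
      = pd i (fun z => g z l j) (x ∘ Sum.inl) :=
    pd_inl_comp_inl (fun z => g z l j) i x (dgi l j)
  have e2 : pd (Sum.inl j) (fun y => twistedMetric g h f y (Sum.inl l) (Sum.inl i)) x
      = pd j (fun z => g z l i) (x ∘ Sum.inl) :=
    pd_inl_comp_inl (fun z => g z l i) j x (dgi l i)
  have e3 : pd (Sum.inl l) (fun y => twistedMetric g h f y (Sum.inl i) (Sum.inl j)) x
      = pd l (fun z => g z i j) (x ∘ Sum.inl) :=
    pd_inl_comp_inl (fun z => g z i j) l x (dgi i j)
  rw [einv, e1, e2, e3]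

end Twisted

/-- on the twisted product `M̄ = M₁ ×_f M₂` with `ξ = log f`, the mixed
Ricci components satisfy `Ric̄(∂ᵢ,∂_α) = (1 - n) ∂ᵢ∂_α(ξ)`. -/
theorem twisted_mixed_ricci {m n : ℕ}
    (g : (Fin m → ℝ) → Matrix (Fin m) (Fin m) ℝ)
    (h : (Fin n → ℝ) → Matrix (Fin n) (Fin n) ℝ)
    (f : ((Fin m ⊕ Fin n) → ℝ) → ℝ)
    (hg : IsMetric g) (hh : IsMetric h)
    (hf : ContDiff ℝ (⊤ : ℕ∞) f) (hfpos : ∀ x, 0 < f x) :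
    ∀ (x : (Fin m ⊕ Fin n) → ℝ) (i : Fin m) (α : Fin n),
      ricci (twistedMetric g h f) (Sum.inl i) (Sum.inr α) x
        = (1 - (n : ℝ)) *
            pd (Sum.inl i) (pd (Sum.inr α) (fun z => Real.log (f z))) x := by
  intro x i α
  set ξ : ((Fin m ⊕ Fin n) → ℝ) → ℝ := fun z => Real.log (f z) with hξdef
  have hgu := hg.2.1
  have hhu := hh.2.1
  have hfd : Differentiable ℝ f := hf.differentiable (by simp)
  have hξ : ContDiff ℝ (⊤ : ℕ∞) ξ := hf.log fun z => (hfpos z).ne'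
  have hlog : ∀ (j : Fin m ⊕ Fin n) (y : (Fin m ⊕ Fin n) → ℝ),
      pd j ξ y = (f y)⁻¹ * pd j f y := fun j y => pd_log j f y (hfd y) (hfpos y).ne'
  have tsymm : ∀ y, (twistedMetric g h f y).IsSymm := twisted_symm g h f hg.1 hh.1
  have F4 : ∀ γ β : Fin n,
      christoffel (twistedMetric g h f) (Sum.inr γ) (Sum.inl i) (Sum.inr β)
        = fun y => if γ = β then pd (Sum.inl i) ξ y else 0 := by
    intro γ β
    funext y
    rw [christoffel_C4 g h f hgu hhu hfpos hh hfd γ i β y]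
    by_cases hgb : γ = β
    · rw [if_pos hgb, if_pos hgb, hlog (Sum.inl i) y]
    · rw [if_neg hgb, if_neg hgb]
  unfold ricci
  have hsum1 : (∑ k, (pd k (christoffel (twistedMetric g h f) k (Sum.inl i) (Sum.inr α)) x
        - pd (Sum.inr α) (christoffel (twistedMetric g h f) k (Sum.inl i) k) x))
      = (1 - (n : ℝ)) * pd (Sum.inr α) (pd (Sum.inl i) ξ) x := by
    rw [Fintype.sum_sum_type]
    have ha : ∀ j : Fin m,
        pd (Sum.inl j) (christoffel (twistedMetric g h f) (Sum.inl j) (Sum.inl i) (Sum.inr α)) x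
          - pd (Sum.inr α)
              (christoffel (twistedMetric g h f) (Sum.inl j) (Sum.inl i) (Sum.inl j)) x = 0 := by
      intro j
      have h1 : christoffel (twistedMetric g h f) (Sum.inl j) (Sum.inl i) (Sum.inr α)
          = fun _ => (0:ℝ) := funext fun y => christoffel_C3 g h f hgu hhu hfpos j i α y
      have h2 : christoffel (twistedMetric g h f) (Sum.inl j) (Sum.inl i) (Sum.inl j)
          = fun y => christoffel g j i j (y ∘ Sum.inl) :=
        funext fun y => christoffel_C1 g h f hg hhu hfpos j i j y
      rw [h1, h2, pd_zero', pd_inr_comp_inl (christoffel g j i j) α x, sub_zero]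
    rw [Finset.sum_eq_zero fun j _ => ha j, zero_add]
    have hb : ∀ γ : Fin n,
        (pd (Sum.inr γ)
            (christoffel (twistedMetric g h f) (Sum.inr γ) (Sum.inl i) (Sum.inr α)) x
          - pd (Sum.inr α)
              (christoffel (twistedMetric g h f) (Sum.inr γ) (Sum.inl i) (Sum.inr γ)) x)
        = (if γ = α then pd (Sum.inr γ) (pd (Sum.inl i) ξ) x else 0)
            - pd (Sum.inr α) (pd (Sum.inl i) ξ) x := by
      intro γ
      congr 1
      · rw [F4 γ α]
        by_cases hga : γ = α
        · rw [if_pos hga]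
          congr 1
          funext y
          rw [if_pos hga]
        · rw [if_neg hga]
          have hz : (fun y => if γ = α then pd (Sum.inl i) ξ y else 0) = fun _ => (0:ℝ) := by
            funext y
            rw [if_neg hga]
          rw [hz]
          exact pd_zero' _ _
      · rw [F4 γ γ]
        congr 1
        funext y
        rw [if_pos rfl]
    rw [Finset.sum_congr rfl fun γ _ => hb γ, Finset.sum_sub_distrib]
    rw [Finset.sum_ite_eq' Finset.univ α (fun γ => pd (Sum.inr γ) (pd (Sum.inl i) ξ) x)]
    rw [Finset.sum_const, Finset.card_univ, Fintype.card_fin, nsmul_eq_mul]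
    simp only [Finset.mem_univ, if_true]
    ring
  have hq : (∑ k, ∑ l, (christoffel (twistedMetric g h f) k k l x
        * christoffel (twistedMetric g h f) l (Sum.inl i) (Sum.inr α) x
      - christoffel (twistedMetric g h f) k (Sum.inr α) l x
        * christoffel (twistedMetric g h f) l (Sum.inl i) k x)) = 0 := by
    rw [Fintype.sum_sum_type]
    have houter1 : ∀ j' : Fin m, (∑ l, (christoffel (twistedMetric g h f) (Sum.inl j') (Sum.inl j') l x
        * christoffel (twistedMetric g h f) l (Sum.inl i) (Sum.inr α) x
      - christoffel (twistedMetric g h f) (Sum.inl j') (Sum.inr α) l x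
        * christoffel (twistedMetric g h f) l (Sum.inl i) (Sum.inl j') x)) = 0 := by
      intro j'
      refine Finset.sum_eq_zero fun l _ => ?_
      rcases l with j | δ
      · rw [christoffel_C3 g h f hgu hhu hfpos j i α x, mul_zero,
          christoffel_C3b g h f hgu hhu hfpos j' j α x, zero_mul, sub_zero]
      · rw [christoffel_C3 g h f hgu hhu hfpos j' j' δ x, zero_mul,
          christoffel_C2 g h f hgu hhu hfpos δ i j' x, mul_zero, sub_zero]
    rw [Finset.sum_eq_zero fun j' _ => houter1 j', zero_add]
    refine Finset.sum_eq_zero fun γ _ => ?_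
    rw [Fintype.sum_sum_type]
    have hin1 : (∑ j : Fin m, (christoffel (twistedMetric g h f) (Sum.inr γ) (Sum.inr γ) (Sum.inl j) x
        * christoffel (twistedMetric g h f) (Sum.inl j) (Sum.inl i) (Sum.inr α) x
      - christoffel (twistedMetric g h f) (Sum.inr γ) (Sum.inr α) (Sum.inl j) x
        * christoffel (twistedMetric g h f) (Sum.inl j) (Sum.inl i) (Sum.inr γ) x)) = 0 := by
      refine Finset.sum_eq_zero fun j _ => ?_
      rw [christoffel_C3 g h f hgu hhu hfpos j i α x, mul_zero,
        christoffel_C3 g h f hgu hhu hfpos j i γ x, mul_zero, sub_zero]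
    rw [hin1, zero_add]
    have hin2 : ∀ δ : Fin n, (christoffel (twistedMetric g h f) (Sum.inr γ) (Sum.inr γ) (Sum.inr δ) x
        * christoffel (twistedMetric g h f) (Sum.inr δ) (Sum.inl i) (Sum.inr α) x
      - christoffel (twistedMetric g h f) (Sum.inr γ) (Sum.inr α) (Sum.inr δ) x
        * christoffel (twistedMetric g h f) (Sum.inr δ) (Sum.inl i) (Sum.inr γ) x)
        = (if δ = α then christoffel (twistedMetric g h f) (Sum.inr γ) (Sum.inr γ) (Sum.inr δ) x
            * ((f x)⁻¹ * pd (Sum.inl i) f x) else 0)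
          - (if δ = γ then christoffel (twistedMetric g h f) (Sum.inr γ) (Sum.inr α) (Sum.inr δ) x
            * ((f x)⁻¹ * pd (Sum.inl i) f x) else 0) := by
      intro δ
      rw [christoffel_C4 g h f hgu hhu hfpos hh hfd δ i α x,
        christoffel_C4 g h f hgu hhu hfpos hh hfd δ i γ x]
      by_cases h1 : δ = α <;> by_cases h2 : δ = γ <;>
        simp [h1, h2]
    rw [Finset.sum_congr rfl fun δ _ => hin2 δ, Finset.sum_sub_distrib,
      Finset.sum_ite_eq' Finset.univ α
        (fun δ => christoffel (twistedMetric g h f) (Sum.inr γ) (Sum.inr γ) (Sum.inr δ) x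
          * ((f x)⁻¹ * pd (Sum.inl i) f x)),
      Finset.sum_ite_eq' Finset.univ γ
        (fun δ => christoffel (twistedMetric g h f) (Sum.inr γ) (Sum.inr α) (Sum.inr δ) x
          * ((f x)⁻¹ * pd (Sum.inl i) f x))]
    simp only [Finset.mem_univ, if_true]
    rw [christoffel_symm (twistedMetric g h f) tsymm (Sum.inr γ) (Sum.inr γ) (Sum.inr α) x]
    ring
  rw [hsum1, hq, add_zero, pd_comm ξ hξ (Sum.inr α) (Sum.inl i) x]
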